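/- Let Γ be a countable group, μ a finitely supported generating probability measure on Γ, and ν a μ-stationary probability measure for a measurable Γ-action on a standard probability space (X, 𝔪). Let A_1 ⊇ A_2 ⊇ ⋯ be a decreasing sequence of Γ-invariant sub-σ-algebras of 𝔪 and let A_∞ = ⋂_{i} A_i. Then the Furstenberg entropies satisfy h_μ(A_∞) = lim_{i→∞} h_μ(A_i) = inf_i h_μ(A_i). -/

import Mathlib

/-!
For `g` in the finite support of `μ`, stationarity and the generating hypothesis squeeze
`(g⁻¹)_*ν` between two positive multiples of `ν`, so `f_g = d((g⁻¹)_*ν)/dν` takes values in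
a compact interval `[c, C] ⊂ (0, ∞)`. The Radon–Nikodym derivative of the restrictions to a
sub-σ-algebra `B` is the conditional expectation `ν[f_g|B]`, so the `g`-term of `h_μ(B)` is
`∫ -log ν[f_g|B] dν`. Conditional Jensen for the convex function `-log` makes it monotone
in `B`. In `L²`, `ν[·|A i]` is the orthogonal projection onto `L²(A i)`; these closed
subspaces decrease to `L²(A_∞)`, because a class with an `A i`-measurable version for every
`i` has the `A_∞`-measurable version `limsup_k` of those versions. Hence
`ν[f_g|A i] → ν[f_g|A_∞]` in `L²`, and since `log` is Lipschitz on `[c, ∞)`, the entropy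
terms converge.
-/

open MeasureTheory Filter Topology

/-- Convolution powers of a probability measure on a discrete group:
`convPow μ 0 = δ_e` and `convPow μ (n+1) {g} = ∑_h μ {h} * convPow μ n {h⁻¹ g}`. -/
noncomputable def convPow {Γ : Type*} [Group Γ] [MeasurableSpace Γ]
    (μ : Measure Γ) : ℕ → Measure Γ
  | 0 => Measure.dirac 1
  | n + 1 => (μ.prod (convPow μ n)).map (fun p => p.1 * p.2)

/-- The Furstenberg entropy of the stationary measure `ν` relative to a (`Γ`-invariant)
sub-σ-algebra `A` of the ambient σ-algebra `mX`:
`h_μ(A) = ∑_{g∈Γ} μ({g}) ∫_X −log( d(((g⁻¹)_*ν)|_A)/d(ν|_A)(x) ) dν(x)`. -/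
noncomputable def furstenbergEntropy {Γ X : Type*} [Group Γ] [MeasurableSpace Γ]
    [SMul Γ X] (A : MeasurableSpace X) {mX : MeasurableSpace X} (hA : A ≤ mX)
    (μ : Measure Γ) (ν : Measure X) : ℝ :=
  ∑' g : Γ, (μ {g}).toReal *
    ∫ x, -Real.log
        ((@Measure.rnDeriv X A ((ν.map fun y => g⁻¹ • y).trim hA) (ν.trim hA) x).toReal) ∂ν

open Set
open scoped ENNReal NNReal

theorem Submodule.starProjection_tendsto_iInf {𝕜 E ι : Type*} [RCLike 𝕜] [NormedAddCommGroup E]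
    [InnerProductSpace 𝕜 E] [CompleteSpace E] [Preorder ι] (K : ι → Submodule 𝕜 E)
    [∀ i, (K i).HasOrthogonalProjection] [(⨅ i, K i).HasOrthogonalProjection]
    (hK : Antitone K) (x : E) :
    Tendsto (fun i => (K i).starProjection x) atTop (𝓝 ((⨅ i, K i).starProjection x)) := by
  -- The complements `(K i)ᗮ` increase, with closed span `(⨅ i, K i)ᗮ`.
  have hclosure : (⨆ i, (K i)ᗮ).topologicalClosure = (⨅ i, K i)ᗮ := by
    rw [← Submodule.orthogonal_orthogonal_eq_closure, ← Submodule.iInf_orthogonal]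
    simp only [Submodule.orthogonal_orthogonal]
  have : (⨆ i, (K i)ᗮ).topologicalClosure.HasOrthogonalProjection := by
    rw [hclosure]; infer_instance
  have h := starProjection_tendsto_closure_iSup (fun i => (K i)ᗮ)
    (fun i j hij => Submodule.orthogonal_le (hK hij)) x
  simp only [hclosure] at h
  have key : ∀ (L : Submodule 𝕜 E) [L.HasOrthogonalProjection],
      L.starProjection x = x - Lᗮ.starProjection x := fun L _ =>
    eq_sub_of_add_eq (L.starProjection_add_starProjection_orthogonal x)
  rw [key]
  convert h.const_sub x using 2 with i
  exact key (K i)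

theorem Real.abs_log_sub_log_le {c x y : ℝ} (hc : 0 < c) (hx : c ≤ x) (hy : c ≤ y) :
    |Real.log x - Real.log y| ≤ c⁻¹ * |x - y| := by
  wlog hyx : y ≤ x generalizing x y
  · rw [abs_sub_comm, abs_sub_comm x]
    exact this hy hx (le_of_not_ge hyx)
  have hy0 : 0 < y := hc.trans_le hy
  rw [abs_of_nonneg (sub_nonneg.2 (Real.log_le_log hy0 hyx)), abs_of_nonneg (sub_nonneg.2 hyx),
    ← Real.log_div (hy0.trans_le hyx).ne' hy0.ne']
  calc Real.log (x / y) ≤ x / y - 1 := Real.log_le_sub_one_of_pos (div_pos (hy0.trans_le hyx) hy0)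
    _ = (x - y) / y := by field_simp
    _ ≤ (x - y) / c := div_le_div_of_nonneg_left (sub_nonneg.2 hyx) hc hy
    _ = c⁻¹ * (x - y) := div_eq_inv_mul _ _

theorem convexOn_neg_log_Icc {c C : ℝ} (hc : 0 < c) :
    ConvexOn ℝ (Icc c C) fun y => -Real.log y :=
  (StrictConcaveOn.concaveOn strictConcaveOn_log_Ioi |>.subset
    (fun _ hy => hc.trans_le hy.1) (convex_Icc c C)).neg

section

variable {X : Type*} {m0 : MeasurableSpace X} {ν : Measure X} {A : ℕ → MeasurableSpace X}
  {c C : ℝ}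

theorem aestronglyMeasurable_iInf_of_antitone (hA : Antitone A) {f : X → ℝ}
    (hf : ∀ i, AEStronglyMeasurable[A i] f ν) : AEStronglyMeasurable[⨅ i, A i] f ν := by
  choose g hg_meas hfg using hf
  have hlimsup_meas : ∀ n, Measurable[A n] fun x => limsup (fun k => g k x) atTop := by
    intro n
    have hshift : (fun x => limsup (fun k => g k x) atTop)
        = fun x => limsup (fun k => g (k + n) x) atTop :=
      funext fun x => (limsup_nat_add (fun k => g k x) n).symm
    rw [hshift]
    exact Measurable.limsup fun k => ((hg_meas (k + n)).measurable.mono (hA (by omega)) le_rfl)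
  refine ⟨fun x => limsup (fun k => g k x) atTop, ?_, ?_⟩
  · exact Measurable.stronglyMeasurable fun s hs =>
      MeasurableSpace.measurableSet_iInf.2 fun n => hlimsup_meas n hs
  · filter_upwards [ae_all_iff.2 hfg] with x hx
    simp [← hx]

theorem lpMeas_iInf_of_antitone (hA : Antitone A) :
    lpMeas ℝ ℝ (⨅ i, A i) 2 ν = ⨅ i, lpMeas ℝ ℝ (A i) 2 ν := by
  ext F
  simp only [Submodule.mem_iInf, mem_lpMeas_iff_aestronglyMeasurable]
  exact ⟨fun hF i => hF.mono (iInf_le A i), aestronglyMeasurable_iInf_of_antitone hA⟩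

theorem tendsto_eLpNorm_condExp_iInf [IsFiniteMeasure ν] (hA : Antitone A)
    (hAm : ∀ i, A i ≤ m0) {f : X → ℝ} (hf : MemLp f 2 ν) :
    Tendsto (fun i => eLpNorm (ν[f|A i] - ν[f|⨅ i, A i]) 2 ν) atTop (𝓝 0) := by
  have hAinf : (⨅ i, A i) ≤ m0 := (iInf_le A 0).trans (hAm 0)
  have : ∀ i, Fact (A i ≤ m0) := fun i => ⟨hAm i⟩
  have : Fact ((⨅ i, A i) ≤ m0) := ⟨hAinf⟩
  have : (⨅ i, lpMeas ℝ ℝ (A i) 2 ν).HasOrthogonalProjection := by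
    rw [← lpMeas_iInf_of_antitone hA]; infer_instance
  have hproj := Submodule.starProjection_tendsto_iInf (fun i => lpMeas ℝ ℝ (A i) 2 ν)
    (fun i j hij F hF => ((mem_lpMeas_iff_aestronglyMeasurable).1 hF).mono (hA hij)) (hf.toLp f)
  have hlim : (⨅ i, lpMeas ℝ ℝ (A i) 2 ν).starProjection (hf.toLp f)
      = (lpMeas ℝ ℝ (⨅ i, A i) 2 ν).starProjection (hf.toLp f) := by
    simp only [← lpMeas_iInf_of_antitone hA]
  rw [hlim, Lp.tendsto_Lp_iff_tendsto_eLpNorm'] at hproj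
  exact hproj.congr fun i => eLpNorm_congr_ae <|
    (hf.condExpL2_ae_eq_condExp (𝕜 := ℝ) (hAm i)).sub (hf.condExpL2_ae_eq_condExp hAinf)

theorem integrable_log_of_ae_mem_Icc [IsFiniteMeasure ν] {g : X → ℝ} (hc : 0 < c)
    (hg : AEStronglyMeasurable g ν) (hgb : ∀ᵐ x ∂ν, g x ∈ Icc c C) :
    Integrable (fun x => Real.log (g x)) ν := by
  refine Integrable.of_bound
    (Real.measurable_log.comp_aemeasurable hg.aemeasurable).aestronglyMeasurable
    (max |Real.log c| |Real.log C|) ?_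
  filter_upwards [hgb] with x hx
  exact abs_le_max_abs_abs (Real.log_le_log hc hx.1) (Real.log_le_log (hc.trans_le hx.1) hx.2)

theorem integral_neg_log_condExp_le [IsFiniteMeasure ν] {m : MeasurableSpace X} (hm : m ≤ m0)
    {g : X → ℝ} (hc : 0 < c) (hg : Integrable g ν) (hgb : ∀ᵐ x ∂ν, g x ∈ Icc c C) :
    ∫ x, -Real.log (ν[g|m] x) ∂ν ≤ ∫ x, -Real.log (g x) ∂ν := by
  have hcond_int := integrable_log_of_ae_mem_Icc hc integrable_condExp.aestronglyMeasurable
    (Convex.condExp_mem hm hg isClosed_Icc (convex_Icc c C) hgb)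
  have hlog := (integrable_log_of_ae_mem_Icc hc hg.aestronglyMeasurable hgb).neg
  have hjensen := (convexOn_neg_log_Icc hc).map_condExp_le hm
    ((Real.continuousOn_log.mono fun y hy => (hc.trans_le hy.1).ne').neg.lowerSemicontinuousOn)
    hgb isClosed_Icc hg hlog
  calc ∫ x, -Real.log (ν[g|m] x) ∂ν ≤ ∫ x, ν[fun x => -Real.log (g x)|m] x ∂ν :=
        integral_mono_ae hcond_int.neg integrable_condExp hjensen
    _ = ∫ x, -Real.log (g x) ∂ν := integral_condExp hm

theorem integral_neg_log_condExp_mono [IsFiniteMeasure ν] {m m' : MeasurableSpace X}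
    (hmm' : m ≤ m') (hm' : m' ≤ m0) {f : X → ℝ} (hc : 0 < c) (hf : Integrable f ν)
    (hfb : ∀ᵐ x ∂ν, f x ∈ Icc c C) :
    ∫ x, -Real.log (ν[f|m] x) ∂ν ≤ ∫ x, -Real.log (ν[f|m'] x) ∂ν := by
  calc ∫ x, -Real.log (ν[f|m] x) ∂ν = ∫ x, -Real.log (ν[ν[f|m']|m] x) ∂ν :=
        integral_congr_ae <| (condExp_condExp_of_le (f := f) hmm' hm').mono fun x hx => by
          simp only [hx]
    _ ≤ ∫ x, -Real.log (ν[f|m'] x) ∂ν := integral_neg_log_condExp_le (hmm'.trans hm') hc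
        integrable_condExp (Convex.condExp_mem hm' hf isClosed_Icc (convex_Icc c C) hfb)

theorem tendsto_integral_neg_log_condExp_iInf [IsProbabilityMeasure ν] (hA : Antitone A)
    (hAm : ∀ i, A i ≤ m0) {f : X → ℝ} (hc : 0 < c) (hf : Integrable f ν)
    (hfb : ∀ᵐ x ∂ν, f x ∈ Icc c C) :
    Tendsto (fun i => ∫ x, -Real.log (ν[f|A i] x) ∂ν) atTop
      (𝓝 (∫ x, -Real.log (ν[f|⨅ i, A i] x) ∂ν)) := by
  have hAinf : (⨅ i, A i) ≤ m0 := (iInf_le A 0).trans (hAm 0)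
  have hcond_mem : ∀ {m : MeasurableSpace X}, m ≤ m0 → ∀ᵐ x ∂ν, ν[f|m] x ∈ Icc c C :=
    fun hm => Convex.condExp_mem hm hf isClosed_Icc (convex_Icc c C) hfb
  have hlog_int : ∀ {m : MeasurableSpace X}, m ≤ m0 →
      Integrable (fun x => -Real.log (ν[f|m] x)) ν := fun hm =>
    (integrable_log_of_ae_mem_Icc hc integrable_condExp.aestronglyMeasurable (hcond_mem hm)).neg
  have hf2 : MemLp f 2 ν := by
    refine MemLp.of_bound hf.aestronglyMeasurable (max |c| |C|) ?_
    filter_upwards [hfb] with x hx using abs_le_max_abs_abs hx.1 hx.2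
  have hlip : ∀ i, eLpNorm ((fun x => -Real.log (ν[f|A i] x)) -
      fun x => -Real.log (ν[f|⨅ i, A i] x)) 1 ν ≤
      ENNReal.ofReal c⁻¹ * eLpNorm (ν[f|A i] - ν[f|⨅ i, A i]) 2 ν := by
    intro i
    calc _ ≤ ENNReal.ofReal c⁻¹ * eLpNorm (ν[f|A i] - ν[f|⨅ i, A i]) 1 ν := by
          refine eLpNorm_le_mul_eLpNorm_of_ae_le_mul ?_ 1
          filter_upwards [hcond_mem (hAm i), hcond_mem hAinf] with x hi hinf
          simpa only [Pi.sub_apply, Real.norm_eq_abs, neg_sub_neg, abs_sub_comm]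
            using Real.abs_log_sub_log_le hc hi.1 hinf.1
      _ ≤ _ := by
          gcongr
          exact eLpNorm_le_eLpNorm_of_exponent_le one_le_two
            (integrable_condExp.sub integrable_condExp).aestronglyMeasurable
  refine tendsto_integral_of_L1' _ (hlog_int hAinf).aestronglyMeasurable
    (Eventually.of_forall fun i => hlog_int (hAm i)) ?_
  have hL2 := ENNReal.Tendsto.const_mul (tendsto_eLpNorm_condExp_iInf hA hAm hf2)
    (Or.inr (ENNReal.ofReal_ne_top (r := c⁻¹)))
  rw [mul_zero] at hL2
  exact tendsto_of_tendsto_of_tendsto_of_le_of_le tendsto_const_nhds hL2 (fun _ => zero_le) hlip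

end

section RadonNikodym
variable {X : Type*} {m0 : MeasurableSpace X} {ν ρ : Measure X}

theorem ae_toReal_rnDeriv_mem_Icc [IsFiniteMeasure ν] {c C : ℝ≥0} (hlow : c • ν ≤ ρ)
    (hup : ρ ≤ C • ν) : ∀ᵐ x ∂ν, (ρ.rnDeriv ν x).toReal ∈ Icc (c : ℝ) C := by
  have : IsFiniteMeasure ρ := isFiniteMeasure_of_le _ hup
  have hρν : ρ ≪ ν := Measure.absolutelyContinuous_of_le_smul (c := C) hup
  have hle_C : ρ.rnDeriv ν ≤ᵐ[ν] fun _ => (C : ℝ≥0∞) := by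
    refine ae_le_of_forall_setLIntegral_le_of_sigmaFinite (Measure.measurable_rnDeriv ρ ν)
      fun s hs _ => ?_
    calc ∫⁻ x in s, ρ.rnDeriv ν x ∂ν ≤ ρ s := Measure.setLIntegral_rnDeriv_le s
      _ ≤ C * ν s := by simpa only [Measure.coe_nnreal_smul_apply] using hup s
      _ = ∫⁻ _ in s, (C : ℝ≥0∞) ∂ν := by rw [setLIntegral_const]
  have hc_le : (fun _ => (c : ℝ≥0∞)) ≤ᵐ[ν] ρ.rnDeriv ν := by
    refine ae_le_of_forall_setLIntegral_le_of_sigmaFinite measurable_const fun s hs _ => ?_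
    calc ∫⁻ _ in s, (c : ℝ≥0∞) ∂ν = c * ν s := by rw [setLIntegral_const]
      _ ≤ ρ s := by simpa only [Measure.coe_nnreal_smul_apply] using hlow s
      _ = ∫⁻ x in s, ρ.rnDeriv ν x ∂ν := (Measure.setLIntegral_rnDeriv' hρν hs).symm
  filter_upwards [hle_C, hc_le] with x hxC hcx
  have hx_ne_top : ρ.rnDeriv ν x ≠ ∞ := ne_top_of_le_ne_top ENNReal.coe_ne_top hxC
  exact ⟨by simpa using ENNReal.toReal_mono hx_ne_top hcx,
    by simpa using ENNReal.toReal_mono ENNReal.coe_ne_top hxC⟩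

theorem integral_neg_log_toReal_rnDeriv_trim {B : MeasurableSpace X} (hB : B ≤ m0)
    [IsFiniteMeasure ν] [IsFiniteMeasure ρ] (hρν : ρ ≪ ν) :
    ∫ x, -Real.log ((ρ.trim hB).rnDeriv (ν.trim hB) x).toReal ∂ν =
      ∫ x, -Real.log (ν[fun x => (ρ.rnDeriv ν x).toReal|B] x) ∂ν :=
  integral_congr_ae <|
    (ae_eq_of_ae_eq_trim (toReal_rnDeriv_trim hB hρν)).fun_comp fun y => -Real.log y

end RadonNikodym

section GroupAction

variable {Γ X : Type*} [Group Γ] [MulAction Γ X] [MeasurableSpace X] {ν : Measure X}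

theorem map_smul_map_smul (hmeas : ∀ g : Γ, Measurable (fun x : X => g • x)) (g h : Γ) :
    (ν.map (g • ·)).map (h • ·) = ν.map ((h * g) • ·) := by
  rw [Measure.map_map (hmeas h) (hmeas g)]
  congr 1 with x
  simp [mul_smul]

end GroupAction

section Stationary

variable {Γ : Type*} [Group Γ] [Countable Γ] [MeasurableSpace Γ] [MeasurableSingletonClass Γ]
  {μ : Measure Γ}

instance isProbabilityMeasure_convPow [IsProbabilityMeasure μ] (n : ℕ) :
    IsProbabilityMeasure (convPow μ n) := by
  induction n with
  | zero => exact Measure.dirac.isProbabilityMeasure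
  | succ n ih => exact Measure.isProbabilityMeasure_map (measurable_of_countable _).aemeasurable

theorem convPow_succ_apply_singleton (n : ℕ) (g : Γ) :
    convPow μ (n + 1) {g} = ∑' h, μ {h} * convPow μ n {h⁻¹ * g} := by
  have hmul : Measurable fun p : Γ × Γ => p.1 * p.2 := measurable_of_countable _
  rw [convPow, Measure.map_apply hmul (measurableSet_singleton g),
    Measure.prod_apply (hmul (measurableSet_singleton g)), lintegral_countable']
  congr 1 with h
  rw [mul_comm]
  congr 2
  ext b
  simp [eq_inv_mul_iff_mul_eq]

variable {X : Type*} [MeasurableSpace X] [MulAction Γ X]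
  (hmeas : ∀ g : Γ, Measurable (fun x : X => g • x)) {ν : Measure X}
  (hstat : Measure.sum (fun g : Γ => μ {g} • ν.map (g • ·)) = ν)
include hmeas hstat

theorem convPow_smul_map_smul_le (n : ℕ) (g : Γ) :
    convPow μ n {g} • ν.map (g • ·) ≤ ν := by
  induction n generalizing g with
  | zero =>
    by_cases hg : g = 1
    · subst hg
      simp [convPow]
    · simp [convPow, Measure.dirac_apply' _ (measurableSet_singleton g), Ne.symm hg,
        Measure.zero_le]
  | succ n ih =>
    refine Measure.le_iff.2 fun s hs => ?_
    have hmap_le : ∀ h : Γ, convPow μ n {h⁻¹ * g} • ν.map (g • ·) ≤ ν.map (h • ·) :=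
      fun h => by simpa [Measure.map_smul, map_smul_map_smul hmeas] using
        Measure.map_mono (ih (h⁻¹ * g)) (hmeas h)
    calc (convPow μ (n + 1) {g} • ν.map (g • ·)) s
        = ∑' h, μ {h} * (convPow μ n {h⁻¹ * g} • ν.map (g • ·)) s := by
          simp only [Measure.smul_apply, smul_eq_mul, convPow_succ_apply_singleton,
            ← ENNReal.tsum_mul_right, mul_assoc]
      _ ≤ ∑' h, μ {h} * ν.map (h • ·) s := by
          gcongr ∑' h, μ {h} * ?_ with h
          exact hmap_le h s
      _ = ν s := by
          conv_rhs => rw [← hstat]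
          simp [Measure.sum_apply _ hs]

theorem exists_smul_le_map_inv_smul_le [IsProbabilityMeasure μ]
    (hgen : ∀ g : Γ, ∃ n : ℕ, convPow μ n {g} ≠ 0) (g : Γ) :
    ∃ c C : ℝ≥0, 0 < c ∧ c • ν ≤ ν.map (g⁻¹ • ·) ∧ ν.map (g⁻¹ • ·) ≤ C • ν := by
  obtain ⟨n, hn⟩ := hgen g
  obtain ⟨m, hm⟩ := hgen g⁻¹
  have hκ := convPow_smul_map_smul_le hmeas hstat n g
  have hκ' := convPow_smul_map_smul_le hmeas hstat m g⁻¹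
  refine ⟨(convPow μ n {g}).toNNReal, (convPow μ m {g⁻¹})⁻¹.toNNReal,
    ENNReal.toNNReal_pos hn (measure_ne_top _ _), ?_, ?_⟩
  · rw [← Measure.coe_nnreal_smul, ENNReal.coe_toNNReal (measure_ne_top _ _)]
    simpa [Measure.map_smul, map_smul_map_smul hmeas] using
      Measure.map_mono hκ (hmeas g⁻¹)
  · rw [← Measure.coe_nnreal_smul, ENNReal.coe_toNNReal (ENNReal.inv_ne_top.2 hm)]
    calc ν.map (g⁻¹ • ·)
        = (convPow μ m {g⁻¹})⁻¹ • convPow μ m {g⁻¹} • ν.map (g⁻¹ • ·) := by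
          rw [smul_smul, ENNReal.inv_mul_cancel hm (measure_ne_top _ _), one_smul]
      _ ≤ (convPow μ m {g⁻¹})⁻¹ • ν := by gcongr

end Stationary

theorem furstenbergEntropy_eq_sum {Γ X : Type*} [Group Γ] [MeasurableSpace Γ] [SMul Γ X]
    (B : MeasurableSpace X) {mX : MeasurableSpace X} (hB : B ≤ mX) (μ : Measure Γ)
    (ν : Measure X) (hfin : {g : Γ | μ {g} ≠ 0}.Finite) :
    furstenbergEntropy B hB μ ν = ∑ g ∈ hfin.toFinset, (μ {g}).toReal *
      ∫ x, -Real.log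
        (@Measure.rnDeriv X B ((ν.map (g⁻¹ • ·)).trim hB) (ν.trim hB) x).toReal ∂ν :=
  tsum_eq_sum fun g hg => by simp_all

theorem furstenbergEntropy_iInf_general
    {Γ : Type*} [Group Γ] [Countable Γ] [MeasurableSpace Γ] [MeasurableSingletonClass Γ]
    {X : Type*} (A : ℕ → MeasurableSpace X) [mX : MeasurableSpace X]
    [MulAction Γ X] (hmeas : ∀ g : Γ, Measurable (fun x : X => g • x))
    (μ : Measure Γ) [IsProbabilityMeasure μ]
    (hfin : {g : Γ | μ {g} ≠ 0}.Finite)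
    (hgen : ∀ g : Γ, ∃ n : ℕ, convPow μ n {g} ≠ 0)
    (ν : Measure X) [IsProbabilityMeasure ν]
    (hstat : Measure.sum (fun g : Γ => μ {g} • ν.map (fun x => g • x)) = ν)
    (hanti : Antitone A) (hAm : ∀ i, A i ≤ mX) :
    Tendsto (fun i => furstenbergEntropy (A i) (hAm i) μ ν) atTop
        (𝓝 (furstenbergEntropy (⨅ i, A i) ((iInf_le A 0).trans (hAm 0)) μ ν)) ∧
      furstenbergEntropy (⨅ i, A i) ((iInf_le A 0).trans (hAm 0)) μ ν =
        ⨅ i, furstenbergEntropy (A i) (hAm i) μ ν := by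
  choose c C hc hlow hup using exists_smul_le_map_inv_smul_le hmeas hstat hgen
  set f : Γ → X → ℝ := fun g x => ((ν.map (g⁻¹ • ·)).rnDeriv ν x).toReal
  have hfb : ∀ g, ∀ᵐ x ∂ν, f g x ∈ Icc (c g : ℝ) (C g) := fun g =>
    ae_toReal_rnDeriv_mem_Icc (hlow g) (hup g)
  have hent : ∀ (B : MeasurableSpace X) (hB : B ≤ mX), furstenbergEntropy B hB μ ν =
      ∑ g ∈ hfin.toFinset, (μ {g}).toReal * ∫ x, -Real.log (ν[f g|B] x) ∂ν := fun B hB => by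
    rw [furstenbergEntropy_eq_sum B hB μ ν hfin]
    refine Finset.sum_congr rfl fun g _ => ?_
    rw [integral_neg_log_toReal_rnDeriv_trim hB
      (Measure.absolutelyContinuous_of_le_smul (hup g))]
  have htend : Tendsto (fun i => furstenbergEntropy (A i) (hAm i) μ ν) atTop
      (𝓝 (furstenbergEntropy (⨅ i, A i) ((iInf_le A 0).trans (hAm 0)) μ ν)) := by
    simp only [hent]
    exact tendsto_finsetSum _ fun g _ => (tendsto_integral_neg_log_condExp_iInf hanti hAm
      (NNReal.coe_pos.2 (hc g)) Measure.integrable_toReal_rnDeriv (hfb g)).const_mul _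
  have hle : ∀ i, furstenbergEntropy (⨅ i, A i) ((iInf_le A 0).trans (hAm 0)) μ ν ≤
      furstenbergEntropy (A i) (hAm i) μ ν := fun i => by
    rw [hent, hent]
    exact Finset.sum_le_sum fun g _ => mul_le_mul_of_nonneg_left
      (integral_neg_log_condExp_mono (iInf_le A i) (hAm i) (NNReal.coe_pos.2 (hc g))
        Measure.integrable_toReal_rnDeriv (hfb g)) ENNReal.toReal_nonneg
  exact ⟨htend, le_antisymm (le_ciInf hle)
    (ge_of_tendsto htend (Eventually.of_forall (ciInf_le ⟨_, Set.forall_mem_range.2 hle⟩)))⟩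

/-- Let `Γ` be a countable group, `μ` a finitely supported generating probability measure
on `Γ`, and `ν` a `μ`-stationary probability measure for a measurable `Γ`-action on a
standard probability space `(X, 𝔪)`.  Let `A 1 ⊇ A 2 ⊇ ⋯` be a decreasing sequence of
`Γ`-invariant sub-σ-algebras of `𝔪` and let `A_∞ = ⨅ i, A i` be their intersection.
Then `h_μ(A_∞) = lim_i h_μ(A i) = inf_i h_μ(A i)`. -/
theorem furstenbergEntropy_iInf
    {Γ : Type*} [Group Γ] [Countable Γ] [MeasurableSpace Γ] [MeasurableSingletonClass Γ]
    {X : Type*} (A : ℕ → MeasurableSpace X) [mX : MeasurableSpace X] [StandardBorelSpace X]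
    [MulAction Γ X] (hmeas : ∀ g : Γ, Measurable (fun x : X => g • x))
    (μ : Measure Γ) [IsProbabilityMeasure μ]
    (hfin : {g : Γ | μ {g} ≠ 0}.Finite)
    (hgen : ∀ g : Γ, ∃ n : ℕ, convPow μ n {g} ≠ 0)
    (ν : Measure X) [IsProbabilityMeasure ν]
    (hstat : Measure.sum (fun g : Γ => μ {g} • ν.map (fun x => g • x)) = ν)
    (hanti : Antitone A) (hAm : ∀ i, A i ≤ mX)
    (hAinv : ∀ (i : ℕ) (g : Γ) (s : Set X),
      MeasurableSet[A i] s → MeasurableSet[A i] ((fun x => g • x) ⁻¹' s)) :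
    Tendsto (fun i => furstenbergEntropy (A i) (hAm i) μ ν) atTop
        (𝓝 (furstenbergEntropy (⨅ i, A i) ((iInf_le A 0).trans (hAm 0)) μ ν)) ∧
      furstenbergEntropy (⨅ i, A i) ((iInf_le A 0).trans (hAm 0)) μ ν =
        ⨅ i, furstenbergEntropy (A i) (hAm i) μ ν :=
  furstenbergEntropy_iInf_general A (mX := mX) hmeas μ hfin hgen ν hstat hanti hAm
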